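/- Let v_0, v_1, v_2, v_3 ∈ ℂ² with det(v_i, v_j) ≠ 0 for all i ≠ j. Set c_{ij} := Log N(det(v_i, v_j)), and define w_0 := c_{03} + c_{12} − c_{02} − c_{13}, w_1 := c_{02} + c_{13} − c_{01} − c_{23}, w_2 := c_{01} + c_{23} − c_{03} − c_{12}, and z := (det(v_0,v_3)·det(v_1,v_2)) / (det(v_1,v_3)·det(v_0,v_2)). Then z ≠ 0, z ≠ 1, w_0 + w_1 + w_2 = 0, and there exist integers p and q such that w_0 = Log z + pπi and w_1 = −Log(1 − z) + qπi. (That is, (w_0, w_1, w_2) is a combinatorial flattening of the ideal tetrahedron with cross-ratio parameter z.) -/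

import Mathlib

open Complex

/-- `det(v,w) = αδ − βγ` for column vectors `v = (α,β)`, `w = (γ,δ)` in `ℂ²`. -/
noncomputable def det2 (v w : Fin 2 → ℂ) : ℂ := v 0 * w 1 - v 1 * w 0

/-- For a nonzero `u`, the unique element of `{u, -u}` whose principal argument
lies in `[0, π)`. -/
noncomputable def signNorm (u : ℂ) : ℂ :=
  if 0 ≤ u.arg ∧ u.arg < Real.pi then u else -u

/-!
Since `N(u) = ±u`, we have `exp (2 c_ij) = det(v_i, v_j)^2`, hence `exp (2 w₀) = z^2`, and the
Plücker relation `1 - z = det(v₀,v₁) det(v₂,v₃) / (det(v₁,v₃) det(v₀,v₂))` gives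
`exp (-2 w₁) = (1 - z)^2`. Two complex numbers whose doubles have the same exponential differ by
an integer multiple of `πi`.
-/

lemma det2_plucker (a b c d : Fin 2 → ℂ) :
    det2 a b * det2 c d - det2 a c * det2 b d + det2 a d * det2 b c = 0 := by
  simp only [det2]; ring

lemma one_sub_det2_cross_ratio {a b c d : Fin 2 → ℂ} (h : det2 b d * det2 a c ≠ 0) :
    1 - det2 a d * det2 b c / (det2 b d * det2 a c) =
      det2 a b * det2 c d / (det2 b d * det2 a c) := by
  rw [eq_div_iff h, sub_mul, div_mul_cancel₀ _ h]
  linear_combination -det2_plucker a b c d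

lemma signNorm_sq (u : ℂ) : signNorm u ^ 2 = u ^ 2 := by
  unfold signNorm; split <;> ring

lemma signNorm_ne_zero {u : ℂ} (hu : u ≠ 0) : signNorm u ≠ 0 := by
  unfold signNorm; split <;> simpa

lemma exp_two_mul_log_signNorm {u : ℂ} (hu : u ≠ 0) :
    exp (2 * log (signNorm u)) = u ^ 2 := by
  rw [two_mul, exp_add, exp_log (signNorm_ne_zero hu), ← sq, signNorm_sq]

lemma exp_two_mul_log_signNorm_ratio {a b c d : ℂ} (ha : a ≠ 0) (hb : b ≠ 0) (hc : c ≠ 0)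
    (hd : d ≠ 0) :
    exp (2 * (log (signNorm a) + log (signNorm b) - log (signNorm c) - log (signNorm d))) =
      (a * b / (c * d)) ^ 2 := by
  rw [mul_sub, mul_sub, mul_add, exp_sub, exp_sub, exp_add, exp_two_mul_log_signNorm ha,
    exp_two_mul_log_signNorm hb, exp_two_mul_log_signNorm hc, exp_two_mul_log_signNorm hd]
  ring

lemma exists_int_eq_log_add_of_exp_two_mul_eq_sq {w u : ℂ} (hu : u ≠ 0)
    (h : exp (2 * w) = u ^ 2) : ∃ k : ℤ, w = log u + k * Real.pi * I := by
  have hexp : exp (2 * w) = exp (2 * log u) := by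
    rw [h, two_mul, exp_add, exp_log hu, sq]
  obtain ⟨k, hk⟩ := exp_eq_exp_iff_exists_int.mp hexp
  exact ⟨k, by linear_combination hk / 2⟩

theorem flattening_of_tetrahedron (v : Fin 4 → Fin 2 → ℂ)
    (hdet : ∀ i j, i ≠ j → det2 (v i) (v j) ≠ 0)
    (c : Fin 4 → Fin 4 → ℂ)
    (hc : ∀ i j, c i j = Complex.log (signNorm (det2 (v i) (v j))))
    (w0 w1 w2 z : ℂ)
    (hw0 : w0 = c 0 3 + c 1 2 - c 0 2 - c 1 3)
    (hw1 : w1 = c 0 2 + c 1 3 - c 0 1 - c 2 3)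
    (hw2 : w2 = c 0 1 + c 2 3 - c 0 3 - c 1 2)
    (hz : z = (det2 (v 0) (v 3) * det2 (v 1) (v 2)) / (det2 (v 1) (v 3) * det2 (v 0) (v 2))) :
    z ≠ 0 ∧ z ≠ 1 ∧ w0 + w1 + w2 = 0 ∧
      ∃ p q : ℤ, w0 = Complex.log z + (p : ℂ) * Real.pi * Complex.I ∧
        w1 = -Complex.log (1 - z) + (q : ℂ) * Real.pi * Complex.I := by
  have h01 := hdet 0 1 (by decide)
  have h02 := hdet 0 2 (by decide)
  have h03 := hdet 0 3 (by decide)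
  have h12 := hdet 1 2 (by decide)
  have h13 := hdet 1 3 (by decide)
  have h23 := hdet 2 3 (by decide)
  have hden := mul_ne_zero h13 h02
  have hz0 : z ≠ 0 := hz ▸ div_ne_zero (mul_ne_zero h03 h12) hden
  have h1z : 1 - z ≠ 0 := by
    rw [hz, one_sub_det2_cross_ratio hden]
    exact div_ne_zero (mul_ne_zero h01 h23) hden
  have hexp0 : exp (2 * w0) = z ^ 2 := by
    rw [hw0, hc, hc, hc, hc, exp_two_mul_log_signNorm_ratio h03 h12 h02 h13, hz]
    ring
  have hexp1 : exp (2 * -w1) = (1 - z) ^ 2 := by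
    rw [show -w1 = c 0 1 + c 2 3 - c 0 2 - c 1 3 by rw [hw1]; ring, hc, hc, hc, hc,
      exp_two_mul_log_signNorm_ratio h01 h23 h02 h13, hz, one_sub_det2_cross_ratio hden]
    ring
  obtain ⟨p, hp⟩ := exists_int_eq_log_add_of_exp_two_mul_eq_sq hz0 hexp0
  obtain ⟨q, hq⟩ := exists_int_eq_log_add_of_exp_two_mul_eq_sq h1z hexp1
  refine ⟨hz0, fun h => h1z (by rw [h, sub_self]), by rw [hw0, hw1, hw2]; ring, p, -q, hp, ?_⟩
  push_cast
  linear_combination -hq
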